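/- Let φ : [A,B] → ℝ≥0 be convex with minimizer x* ∈ [A,B], let W_A ⊆ [A,x*] and W_B ⊆ [x*,B] be finite sets containing the respective interval endpoints whose induced convex extensions K-approximate φ on [A,x*] and [x*,B] respectively, and suppose additionally that φ(ℓ) ≤ K·φ(x*) and φ(r) ≤ K·φ(x*), where ℓ = max{x ∈ W_A} with ℓ ≤ x* and r = min{x ∈ W_B} with r ≥ x*. Then the convex extension of φ induced by W := W_A ∪ W_B is a K-approximation of φ on all of [A,B]. -/

import Mathlib

open Set

/-- The convex extension of φ induced by a finite set E: the lower envelope of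
the convex hull of {(x, φ(x)) : x ∈ E}. -/
noncomputable def convExt (φ : ℝ → ℝ) (E : Finset ℝ) (x : ℝ) : ℝ :=
  sInf {y : ℝ | (x, y) ∈ convexHull ℝ ((fun e => (e, φ e)) '' (E : Set ℝ))}

/-!
The lower bound holds because the convex hull of points on the graph of a convex function lies
in its epigraph. For the upper bound, enlarging the point set only lowers the envelope, so
on `[A, ℓ]` and `[r, B]` the bounds for `W_A` and `W_B` carry over. On `(ℓ, r)` the chord from
`(ℓ, φ ℓ)` to `(r, φ r)` keeps the envelope below `max (φ ℓ) (φ r) ≤ K φ(x*) ≤ K φ x`.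
-/

def graphHull (φ : ℝ → ℝ) (E : Finset ℝ) : Set (ℝ × ℝ) :=
  convexHull ℝ ((fun e => (e, φ e)) '' (E : Set ℝ))

theorem graphHull_mono (φ : ℝ → ℝ) {E F : Finset ℝ} (hEF : E ⊆ F) :
    graphHull φ E ⊆ graphHull φ F :=
  convexHull_mono (image_mono (Finset.coe_subset.mpr hEF))

theorem bddBelow_fiber_graphHull (φ : ℝ → ℝ) (E : Finset ℝ) (x : ℝ) :
    BddBelow {y | (x, y) ∈ graphHull φ E} := by
  have hcompact : IsCompact (Prod.snd '' graphHull φ E) :=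
    ((E.finite_toSet.image _).isCompact_convexHull ℝ).image continuous_snd
  exact hcompact.bddBelow.mono fun y hy => mem_image_of_mem Prod.snd hy

theorem exists_mem_graphHull_le_max (φ : ℝ → ℝ) {E : Finset ℝ} {u v x : ℝ}
    (hu : u ∈ E) (hv : v ∈ E) (hx : x ∈ Icc u v) :
    ∃ y ≤ max (φ u) (φ v), (x, y) ∈ graphHull φ E := by
  rw [← segment_eq_Icc (hx.1.trans hx.2)] at hx
  obtain ⟨a, b, ha, hb, hab, rfl⟩ := hx
  refine ⟨a * φ u + b * φ v, ?_, ?_⟩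
  · calc a * φ u + b * φ v ≤ a * max (φ u) (φ v) + b * max (φ u) (φ v) := by
          gcongr
          exacts [le_max_left _ _, le_max_right _ _]
      _ = max (φ u) (φ v) := by rw [← add_mul, hab, one_mul]
  · have hseg := segment_subset_convexHull (𝕜 := ℝ)
      (mem_image_of_mem (fun e => (e, φ e)) (Finset.mem_coe.mpr hu))
      (mem_image_of_mem (fun e => (e, φ e)) (Finset.mem_coe.mpr hv))
    exact hseg ⟨a, b, ha, hb, hab, by simp⟩

theorem convExt_le_max {φ : ℝ → ℝ} {E : Finset ℝ} {u v x : ℝ}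
    (hu : u ∈ E) (hv : v ∈ E) (hx : x ∈ Icc u v) :
    convExt φ E x ≤ max (φ u) (φ v) := by
  obtain ⟨y, hy_le, hy⟩ := exists_mem_graphHull_le_max φ hu hv hx
  exact (csInf_le (bddBelow_fiber_graphHull φ E x) hy).trans hy_le

theorem convExt_anti {φ : ℝ → ℝ} {E F : Finset ℝ} (hEF : E ⊆ F) {u v x : ℝ}
    (hu : u ∈ E) (hv : v ∈ E) (hx : x ∈ Icc u v) :
    convExt φ F x ≤ convExt φ E x := by
  obtain ⟨y, -, hy⟩ := exists_mem_graphHull_le_max φ hu hv hx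
  exact csInf_le_csInf (bddBelow_fiber_graphHull φ F x) ⟨y, hy⟩
    fun y hy => graphHull_mono φ hEF hy

theorem le_convExt {s : Set ℝ} {φ : ℝ → ℝ} (hconv : ConvexOn ℝ s φ) {E : Finset ℝ}
    (hE : (E : Set ℝ) ⊆ s) {u v x : ℝ} (hu : u ∈ E) (hv : v ∈ E) (hx : x ∈ Icc u v) :
    φ x ≤ convExt φ E x := by
  have hepi : graphHull φ E ⊆ {p | p.1 ∈ s ∧ φ p.1 ≤ p.2} :=
    convexHull_min (by rintro _ ⟨e, he, rfl⟩; exact ⟨hE he, le_rfl⟩) hconv.convex_epigraph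
  obtain ⟨y, -, hy⟩ := exists_mem_graphHull_le_max φ hu hv hx
  exact le_csInf ⟨y, hy⟩ fun y hy => (hepi hy).2

theorem glue_approx_sets_general (A B xstar K : ℝ) (hK : 1 ≤ K)
    (hA : A ≤ xstar) (hB : xstar ≤ B)
    (φ : ℝ → ℝ) (hconv : ConvexOn ℝ (Icc A B) φ)
    (hmin : ∀ x ∈ Icc A B, φ xstar ≤ φ x)
    (W_A W_B : Finset ℝ)
    (hWA : (W_A : Set ℝ) ⊆ Icc A xstar) (hWB : (W_B : Set ℝ) ⊆ Icc xstar B)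
    (hAin : A ∈ W_A) (hBin : B ∈ W_B)
    (hWAne : W_A.Nonempty) (hWBne : W_B.Nonempty)
    (hapxA : ∀ x ∈ Icc A xstar, φ x ≤ convExt φ W_A x ∧ convExt φ W_A x ≤ K * φ x)
    (hapxB : ∀ x ∈ Icc xstar B, φ x ≤ convExt φ W_B x ∧ convExt φ W_B x ≤ K * φ x)
    (hl : φ (W_A.max' hWAne) ≤ K * φ xstar)
    (hr : φ (W_B.min' hWBne) ≤ K * φ xstar) :
    ∀ x ∈ Icc A B, φ x ≤ convExt φ (W_A ∪ W_B) x ∧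
      convExt φ (W_A ∪ W_B) x ≤ K * φ x := by
  intro x hx
  set l := W_A.max' hWAne
  set r := W_B.min' hWBne
  have hlA : l ∈ W_A := W_A.max'_mem hWAne
  have hrB : r ∈ W_B := W_B.min'_mem hWBne
  have hW : ((W_A ∪ W_B : Finset ℝ) : Set ℝ) ⊆ Icc A B := by
    rw [Finset.coe_union]
    exact union_subset (hWA.trans (Icc_subset_Icc_right hB)) (hWB.trans (Icc_subset_Icc_left hA))
  refine ⟨le_convExt hconv hW (Finset.mem_union_left _ hAin) (Finset.mem_union_right _ hBin) hx, ?_⟩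
  rcases le_or_gt x l with hxl | hlx
  · calc convExt φ (W_A ∪ W_B) x ≤ convExt φ W_A x :=
          convExt_anti Finset.subset_union_left hAin hlA ⟨hx.1, hxl⟩
      _ ≤ K * φ x := (hapxA x ⟨hx.1, hxl.trans (hWA hlA).2⟩).2
  rcases le_or_gt r x with hrx | hxr
  · calc convExt φ (W_A ∪ W_B) x ≤ convExt φ W_B x :=
          convExt_anti Finset.subset_union_right hrB hBin ⟨hrx, hx.2⟩
      _ ≤ K * φ x := (hapxB x ⟨(hWB hrB).1.trans hrx, hx.2⟩).2
  calc convExt φ (W_A ∪ W_B) x ≤ max (φ l) (φ r) :=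
        convExt_le_max (Finset.mem_union_left _ hlA) (Finset.mem_union_right _ hrB) ⟨hlx.le, hxr.le⟩
    _ ≤ K * φ xstar := max_le hl hr
    _ ≤ K * φ x := mul_le_mul_of_nonneg_left (hmin x hx) (zero_le_one.trans hK)

/-- Gluing two K-approximation sets of a convex function at a minimizer yields a
K-approximation set on the whole interval. -/
theorem glue_approx_sets (A B xstar K : ℝ) (hK : 1 ≤ K)
    (hA : A ≤ xstar) (hB : xstar ≤ B)
    (φ : ℝ → ℝ) (hconv : ConvexOn ℝ (Icc A B) φ)
    (hnonneg : ∀ x ∈ Icc A B, 0 ≤ φ x)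
    (hmin : ∀ x ∈ Icc A B, φ xstar ≤ φ x)
    (W_A W_B : Finset ℝ)
    (hWA : (W_A : Set ℝ) ⊆ Icc A xstar) (hWB : (W_B : Set ℝ) ⊆ Icc xstar B)
    (hAin : A ∈ W_A) (hBin : B ∈ W_B)
    (hWAne : W_A.Nonempty) (hWBne : W_B.Nonempty)
    (hapxA : ∀ x ∈ Icc A xstar, φ x ≤ convExt φ W_A x ∧ convExt φ W_A x ≤ K * φ x)
    (hapxB : ∀ x ∈ Icc xstar B, φ x ≤ convExt φ W_B x ∧ convExt φ W_B x ≤ K * φ x)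
    (hl : φ (W_A.max' hWAne) ≤ K * φ xstar)
    (hr : φ (W_B.min' hWBne) ≤ K * φ xstar) :
    ∀ x ∈ Icc A B, φ x ≤ convExt φ (W_A ∪ W_B) x ∧
      convExt φ (W_A ∪ W_B) x ≤ K * φ x :=
  glue_approx_sets_general A B xstar K hK hA hB φ hconv hmin W_A W_B hWA hWB hAin hBin hWAne hWBne
    hapxA hapxB hl hr
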